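/- Every connected bipartite Cayley graph of diameter at least 2 is 2-distance-balanced. -/

import Mathlib

open SimpleGraph

/-- The set of vertices strictly closer to `u` than to `v`. -/
def wSet {V : Type*} (G : SimpleGraph V) (u v : V) : Set V :=
  {w | G.dist u w < G.dist v w}

/-- The pair `u, v` is balanced if `|W_{uv}| = |W_{vu}|`. -/
def IsBalancedPair {V : Type*} (G : SimpleGraph V) (u v : V) : Prop :=
  (wSet G u v).ncard = (wSet G v u).ncard

/-- `G` is `ℓ`-distance-balanced if every pair of vertices at distance `ℓ` is balanced. -/
def IsDistBalanced {V : Type*} (G : SimpleGraph V) (ℓ : ℕ) : Prop :=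
  ∀ u v : V, G.dist u v = ℓ → IsBalancedPair G u v

/-- `G` is highly distance-balanced if it is `ℓ`-distance-balanced for all `1 ≤ ℓ ≤ diam`. -/
def IsHighlyDistBalanced {V : Type*} (G : SimpleGraph V) : Prop :=
  ∀ ℓ : ℕ, 1 ≤ ℓ → ℓ ≤ G.diam → IsDistBalanced G ℓ

/-- The generalized Petersen graph `GP(n,k)`: `Sum.inl i` is the outer vertex `u_i`,
`Sum.inr i` is the inner vertex `v_i`. -/
def GP (n k : ℕ) : SimpleGraph (ZMod n ⊕ ZMod n) :=
  SimpleGraph.fromRel (fun x y =>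
    match x, y with
    | Sum.inl i, Sum.inl j => j = i + 1
    | Sum.inr i, Sum.inr j => j = i + (k : ZMod n)
    | Sum.inl i, Sum.inr j => i = j
    | Sum.inr _, Sum.inl _ => False)

/-- The Cayley graph of a group with connection set `S` (intended for `S = S⁻¹`, `1 ∉ S`). -/
def cayleyGraph {A : Type*} [Group A] (S : Set A) : SimpleGraph A :=
  SimpleGraph.fromRel (fun g h => g⁻¹ * h ∈ S)

/-!
In a connected bipartite graph, the distances from `w` to two vertices `u`, `v` at distance 2 have the same
parity and differ by at most 2, so `d(v,w) - d(u,w) ∈ {-2, 0, 2}`, with the value `2` exactly on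
`W_{uv}` and `-2` exactly on `W_{vu}`. Summing over `w`, `|W_{uv}| - |W_{vu}|` is half the difference
of the transmissions `∑_w d(u,w)` and `∑_w d(v,w)`, which vanishes in a vertex-transitive graph such as
a Cayley graph.
-/

open Finset

theorem Finset.card_filter_lt_eq_card_filter_gt_of_sum_eq {ι : Type*} (s : Finset ι)
    {f g : ι → ℕ} {k : ℕ} (hk : k ≠ 0)
    (hfg : ∀ i ∈ s, g i = f i ∨ g i = f i + k ∨ f i = g i + k)
    (hsum : ∑ i ∈ s, f i = ∑ i ∈ s, g i) :
    #{i ∈ s | f i < g i} = #{i ∈ s | g i < f i} := by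
  have hpoint : ∀ i ∈ s, (g i : ℤ) - f i =
      (if f i < g i then (k : ℤ) else 0) - (if g i < f i then (k : ℤ) else 0) := by
    intro i hi
    rcases hfg i hi with h | h | h <;> simp [h, Nat.pos_of_ne_zero hk]
  have hdiff : (k : ℤ) * #{i ∈ s | f i < g i} - k * #{i ∈ s | g i < f i} = 0 := by
    calc (k : ℤ) * #{i ∈ s | f i < g i} - k * #{i ∈ s | g i < f i}
        = ∑ i ∈ s, ((g i : ℤ) - f i) := by
          rw [sum_congr rfl hpoint, sum_sub_distrib, ← sum_filter, ← sum_filter]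
          simp [mul_comm]
      _ = 0 := by rw [sum_sub_distrib, sub_eq_zero]; exact_mod_cast hsum.symm
  have : (k : ℤ) ≠ 0 := by exact_mod_cast hk
  exact_mod_cast mul_left_cancel₀ this (sub_eq_zero.1 hdiff)

namespace SimpleGraph

variable {V W : Type*} {G : SimpleGraph V} {H : SimpleGraph W} {u v : V}

theorem Reachable.dist_map_le (f : G →g H) (h : G.Reachable u v) :
    H.dist (f u) (f v) ≤ G.dist u v := by
  obtain ⟨p, hp⟩ := h.exists_walk_length_eq_dist
  simpa [hp] using H.dist_le (p.map f)

theorem Iso.dist_eq (f : G ≃g H) (u v : V) : H.dist (f u) (f v) = G.dist u v := by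
  by_cases h : G.Reachable u v
  · refine le_antisymm (h.dist_map_le f.toHom) ?_
    simpa using (Iso.reachable_iff (φ := f)).2 h |>.dist_map_le f.symm.toHom
  · rw [dist_eq_zero_of_not_reachable h,
      dist_eq_zero_of_not_reachable (Iso.reachable_iff.not.2 h)]

theorem Iso.sum_dist_eq [Fintype V] (f : G ≃g G) (v : V) :
    ∑ w, G.dist (f v) w = ∑ w, G.dist v w := by
  rw [← Equiv.sum_comp f.toEquiv]
  exact sum_congr rfl fun w _ => f.dist_eq v w

theorem Coloring.even_dist_iff (c : G.Coloring Bool) (h : G.Reachable u v) :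
    Even (G.dist u v) ↔ (c u ↔ c v) := by
  obtain ⟨p, hp⟩ := h.exists_walk_length_eq_dist
  rw [← hp]
  exact c.even_length_iff_congr p

theorem Connected.dist_eq_or_eq_add_two_of_dist_eq_two (hG : G.Connected) (hbip : G.Colorable 2)
    (huv : G.dist u v = 2) (w : V) :
    G.dist v w = G.dist u w ∨ G.dist v w = G.dist u w + 2 ∨ G.dist u w = G.dist v w + 2 := by
  obtain ⟨c⟩ := hbip
  set c' := G.recolorOfEquiv finTwoEquiv c
  have hparity : Even (G.dist u w) ↔ Even (G.dist v w) := by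
    have huv' := (c'.even_dist_iff (hG u v)).1 (huv ▸ even_two)
    rw [c'.even_dist_iff (hG u w), c'.even_dist_iff (hG v w)]
    tauto
  have hu := hG.dist_triangle (u := u) (v := v) (w := w)
  have hv := hG.dist_triangle (u := v) (v := u) (w := w)
  rw [show G.dist v u = 2 from dist_comm.trans huv] at hv
  rw [Nat.even_iff, Nat.even_iff] at hparity
  omega

theorem isBalancedPair_of_sum_dist_eq [Fintype V] (hG : G.Connected) (hbip : G.Colorable 2)
    (huv : G.dist u v = 2) (hsum : ∑ w, G.dist u w = ∑ w, G.dist v w) :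
    IsBalancedPair G u v := by
  classical
  have hcard := card_filter_lt_eq_card_filter_gt_of_sum_eq univ two_ne_zero
    (fun w _ => hG.dist_eq_or_eq_add_two_of_dist_eq_two hbip huv w) hsum
  simpa [IsBalancedPair, wSet, Set.ncard_eq_toFinset_card', Set.toFinset_ofPred] using hcard

theorem isDistBalanced_two_of_forall_iso [Fintype V] (hG : G.Connected) (hbip : G.Colorable 2)
    (htrans : ∀ u v : V, ∃ f : G ≃g G, f v = u) : IsDistBalanced G 2 := by
  intro u v huv
  obtain ⟨f, rfl⟩ := htrans u v
  exact isBalancedPair_of_sum_dist_eq hG hbip huv (f.sum_dist_eq v)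

end SimpleGraph

def cayleyGraph.mulLeftIso {A : Type*} [Group A] (S : Set A) (g : A) :
    cayleyGraph S ≃g cayleyGraph S where
  toEquiv := Equiv.mulLeft g
  map_rel_iff' := by simp [cayleyGraph, mul_assoc]

theorem statement_6_general {A : Type*} [Group A] [Fintype A] (S : Set A)
    (hc : (cayleyGraph S).Connected) (hbip : (cayleyGraph S).Colorable 2) :
    IsDistBalanced (cayleyGraph S) 2 :=
  isDistBalanced_two_of_forall_iso hc hbip fun u v =>
    ⟨cayleyGraph.mulLeftIso S (u * v⁻¹), by simp [cayleyGraph.mulLeftIso]⟩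

theorem statement_6 {A : Type*} [Group A] [Fintype A] (S : Set A)
    (hSinv : S⁻¹ = S) (hS1 : (1 : A) ∉ S)
    (hc : (cayleyGraph S).Connected) (hbip : (cayleyGraph S).Colorable 2)
    (hdiam : 2 ≤ (cayleyGraph S).diam) :
    IsDistBalanced (cayleyGraph S) 2 :=
  statement_6_general S hc hbip
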